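/- arXiv:2504.01967 — 4 statements merged into one kernel-verified Lean document; each statement's English description precedes it below -/
import Mathlib

section
/- Let r be an odd prime and let A, B, a, b be integers with r ∤ A·B·a·b and r ∣ (A·a^r + B·b^r). Then A^(r-1) ≡ B^(r-1) (mod r²) if and only if r² ∣ (A·a^r + B·b^r). -/
/-- If `r` is an odd prime, `r ∤ A·B·a·b` and `r ∣ A·a^r + B·b^r`, then
`A^(r-1) ≡ B^(r-1) (mod r²)` iff `r² ∣ A·a^r + B·b^r`. -/
theorem stmt2 (r : ℕ) (hr : r.Prime) (hodd : Odd r) (A B a b : ℤ)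
    (hndvd : ¬ (r : ℤ) ∣ A * B * a * b) (hdvd : (r : ℤ) ∣ A * a ^ r + B * b ^ r) :
    A ^ (r - 1) ≡ B ^ (r - 1) [ZMOD ((r : ℤ) ^ 2)] ↔ (r : ℤ) ^ 2 ∣ A * a ^ r + B * b ^ r := by
  haveI : Fact r.Prime := ⟨hr⟩
  have hrI : Prime (r : ℤ) := Nat.prime_iff_prime_int.mp hr
  have hA : ¬ (r : ℤ) ∣ A := fun h => hndvd (((h.mul_right B).mul_right a).mul_right b)
  have hB : ¬ (r : ℤ) ∣ B := fun h => hndvd (((h.mul_left A).mul_right a).mul_right b)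
  have ha : ¬ (r : ℤ) ∣ a := fun h => hndvd (((h.mul_left (A * B)).mul_right b))
  have hb : ¬ (r : ℤ) ∣ b := fun h => hndvd (h.mul_left (A * B * a))
  set n : ℕ := r - 1 with hn
  set u : ℤ := A * a ^ r with hu
  set v : ℤ := B * b ^ r with hv
  have hrpos : 0 < r := hr.pos
  have hnr : n + 1 = r := Nat.succ_pred_eq_of_pos hrpos
  have hune : ¬ (r : ℤ) ∣ u := by
    intro h
    rcases hrI.dvd_mul.mp h with h | h
    · exact hA h
    · exact ha (hrI.dvd_of_dvd_pow h)
  -- key: for r ∤ x, r^2 ∣ (x^n)^r - 1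
  have key : ∀ x : ℤ, ¬ (r : ℤ) ∣ x → (r : ℤ) ^ 2 ∣ (x ^ n) ^ r - 1 := by
    intro x hx
    have hcop : IsCoprime x (r : ℤ) := ((hrI.coprime_iff_not_dvd).mpr hx).symm
    have h1 : (r : ℤ) ∣ x ^ n - 1 :=
      dvd_sub_comm.mp (Int.ModEq.pow_card_sub_one_eq_one hr hcop).dvd
    have h2 := dvd_sub_pow_of_dvd_sub (p := r) (a := x ^ n) (b := 1) h1 1
    simpa using h2
  have hU : (r : ℤ) ^ 2 ∣ u ^ n - A ^ n := by
    have : u ^ n - A ^ n = A ^ n * ((a ^ n) ^ r - 1) := by rw [hu]; ring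
    rw [this]
    exact Dvd.dvd.mul_left (key a ha) _
  have hV : (r : ℤ) ^ 2 ∣ v ^ n - B ^ n := by
    have : v ^ n - B ^ n = B ^ n * ((b ^ n) ^ r - 1) := by rw [hv]; ring
    rw [this]
    exact Dvd.dvd.mul_left (key b hb) _
  have hneven : Even n := Nat.Odd.sub_odd hodd odd_one
  set S : ℤ := ∑ i ∈ Finset.range n, u ^ i * (-v) ^ (n - 1 - i) with hS
  have hfac : u ^ n - v ^ n = S * (u + v) := by
    have := geom_sum₂_mul u (-v) n
    rw [hneven.neg_pow] at this
    rw [← this, hS]; ring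
  have hSnd : ¬ (r : ℤ) ∣ S := by
    rw [← ZMod.intCast_zmod_eq_zero_iff_dvd]
    have huv0 : ((u : ZMod r) + (v : ZMod r)) = 0 := by
      have := (ZMod.intCast_zmod_eq_zero_iff_dvd (u + v) r).mpr hdvd
      push_cast at this
      exact this
    have hvu : ((-v : ℤ) : ZMod r) = (u : ZMod r) := by
      push_cast
      linear_combination -huv0
    have hu0 : (u : ZMod r) ≠ 0 := by
      rw [Ne, ZMod.intCast_zmod_eq_zero_iff_dvd]
      exact hune
    have hval : ((S : ℤ) : ZMod r) = (n : ZMod r) * (u : ZMod r) ^ (n - 1) := by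
      rw [hS]
      push_cast
      rw [Finset.sum_congr rfl (fun i hi => ?_), Finset.sum_const, Finset.card_range,
        nsmul_eq_mul]
      have hi' : i ≤ n - 1 := Nat.le_pred_of_lt (Finset.mem_range.mp hi)
      have : ((-v : ℤ) : ZMod r) ^ (n - 1 - i) = (u : ZMod r) ^ (n - 1 - i) := by
        push_cast at hvu ⊢
        rw [hvu]
      push_cast at this ⊢
      rw [this, ← pow_add, Nat.add_sub_cancel' hi']
    rw [hval]
    have hn0 : (n : ZMod r) ≠ 0 := by
      have : (n : ZMod r) = -1 := by
        have : ((n : ℕ) : ZMod r) + 1 = ((n + 1 : ℕ) : ZMod r) := by push_cast; ring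
        rw [eq_neg_iff_add_eq_zero, this, hnr, ZMod.natCast_self]
      rw [this]
      exact neg_ne_zero.mpr one_ne_zero
    exact mul_ne_zero hn0 (pow_ne_zero _ hu0)
  have hmain : (r : ℤ) ^ 2 ∣ u ^ n - v ^ n ↔ (r : ℤ) ^ 2 ∣ u + v := by
    constructor
    · intro h
      obtain ⟨m, hm⟩ := hdvd
      rw [hfac, hm] at h
      have hr0 : (r : ℤ) ≠ 0 := by exact_mod_cast hr.ne_zero
      have : (r : ℤ) ∣ S * m := by
        obtain ⟨k, hk⟩ := h
        refine ⟨k, mul_left_cancel₀ hr0 ?_⟩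
        rw [show (r:ℤ) * (S * m) = S * ((r:ℤ) * m) by ring, hk]; ring
      rcases hrI.dvd_mul.mp this with h | h
      · exact absurd h hSnd
      · rw [hm, sq]
        exact mul_dvd_mul_left _ h
    · intro h
      rw [hfac]
      exact h.mul_left S
  rw [Int.modEq_iff_dvd]
  constructor
  · intro h
    apply hmain.mp
    have : u ^ n - v ^ n = -(B ^ n - A ^ n) + (u ^ n - A ^ n) - (v ^ n - B ^ n) := by ring
    rw [this]
    exact dvd_sub (dvd_add (dvd_neg.mpr h) hU) hV
  · intro h
    have h' : (r : ℤ) ^ 2 ∣ u ^ n - v ^ n := hmain.mpr h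
    have : B ^ n - A ^ n = -(u ^ n - v ^ n) - (v ^ n - B ^ n) + (u ^ n - A ^ n) := by ring
    rw [this]
    exact dvd_add (dvd_sub (dvd_neg.mpr h') hV) hU
end

section
/- Let r be an odd prime, let ζ be a primitive r-th root of unity in ℂ, and let h_r(x) = ∏_{j=1}^{(r−1)/2} (x − (ζ^j + ζ^(−j))) be the minimal polynomial of ζ + ζ^(−1) over ℚ. Then, as polynomials (after clearing denominators), (−X·Y)^((r−1)/2) · (X + Y) · h_r(2 − (X+Y)²/(X·Y)) = X^r + Y^r. -/
/-!
For odd `r`, `X ^ r + Y ^ r = ∏ i < r, (X + ζ ^ i * Y)`. Pairing the factor `i` with `r - i`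
leaves `X + Y` alone, and each pair `(X + ζ ^ j * Y) * (X + ζ ^ (-j) * Y)` equals
`-(X * Y) * (2 - (X + Y) ^ 2 / (X * Y) - (ζ ^ j + ζ ^ (-j)))`.
-/

open Finset Polynomial

theorem IsPrimitiveRoot.prod_nthRootsFinset_eq_prod_range {R M : Type*} [CommRing R] [IsDomain R]
    [CommMonoid M] {ζ : R} {n : ℕ} (hζ : IsPrimitiveRoot ζ n) (hn : 0 < n) (f : R → M) :
    ∏ η ∈ nthRootsFinset n (1 : R), f η = ∏ i ∈ range n, f (ζ ^ i) := by
  refine (prod_nbij (ζ ^ ·) (fun i _ ↦ (Polynomial.mem_nthRootsFinset hn 1).2 ?_) ?_ ?_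
    fun _ _ ↦ rfl).symm
  · rw [← pow_mul, mul_comm, pow_mul, hζ.pow_eq_one, one_pow]
  · intro i hi j hj h
    exact hζ.pow_inj (mem_range.1 hi) (mem_range.1 hj) h
  · intro η hη
    have : NeZero n := ⟨hn.ne'⟩
    obtain ⟨i, hi, rfl⟩ := hζ.eq_pow_of_pow_eq_one ((Polynomial.mem_nthRootsFinset hn 1).1 hη)
    exact ⟨i, mem_range.2 hi, rfl⟩

theorem Finset.prod_range_two_mul_add_one {M : Type*} [CommMonoid M] (f : ℕ → M) (m : ℕ) :
    ∏ i ∈ range (2 * m + 1), f i = f 0 * ∏ j ∈ Icc 1 m, f j * f (2 * m + 1 - j) := by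
  rw [prod_mul_distrib, range_eq_Ico, prod_eq_prod_Ico_succ_bot (by omega),
    ← prod_Ico_consecutive _ (by omega : 1 ≤ m + 1) (by omega : m + 1 ≤ 2 * m + 1),
    ← Ico_add_one_right_eq_Icc, prod_Ico_reflect _ _ (by omega : m + 1 ≤ 2 * m + 1 + 1)]
  congr 4
  omega

theorem IsPrimitiveRoot.pow_add_pow_eq_mul_prod_pairs {K : Type*} [Field K] {ζ : K} {m : ℕ}
    (hζ : IsPrimitiveRoot ζ (2 * m + 1)) (x y : K) :
    x ^ (2 * m + 1) + y ^ (2 * m + 1) =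
      (x + y) * ∏ j ∈ Icc 1 m, (x + ζ ^ j * y) * (x + ζ⁻¹ ^ j * y) := by
  rw [hζ.pow_add_pow_eq_prod_add_mul x y (odd_two_mul_add_one m),
    hζ.prod_nthRootsFinset_eq_prod_range (by omega), prod_range_two_mul_add_one, pow_zero,
    one_mul]
  refine congrArg _ (prod_congr rfl fun j hj ↦ ?_)
  rw [pow_sub₀ _ (hζ.ne_zero (by omega)) (by grind), hζ.pow_eq_one, one_mul, inv_pow]

theorem add_mul_mul_add_inv_mul_eq {K : Type*} [Field K] {x y ω : K} (hx : x ≠ 0) (hy : y ≠ 0)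
    (hω : ω ≠ 0) :
    (x + ω * y) * (x + ω⁻¹ * y) = -(x * y) * (2 - (x + y) ^ 2 / (x * y) - (ω + ω⁻¹)) := by
  field_simp
  ring

theorem stmt5_general (r : ℕ) (hodd : Odd r) (ζ : ℂ) (hζ : IsPrimitiveRoot ζ r)
    (X Y : ℂ) (hX : X ≠ 0) (hY : Y ≠ 0) :
    (-(X * Y)) ^ ((r - 1) / 2) * (X + Y) *
        ∏ j ∈ Finset.Icc 1 ((r - 1) / 2),
          (2 - (X + Y) ^ 2 / (X * Y) - (ζ ^ j + ζ⁻¹ ^ j)) =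
      X ^ r + Y ^ r := by
  obtain ⟨m, rfl⟩ := hodd
  have hζ0 : ζ ≠ 0 := hζ.ne_zero (by omega)
  rw [show (2 * m + 1 - 1) / 2 = m by omega, hζ.pow_add_pow_eq_mul_prod_pairs]
  simp only [inv_pow]
  rw [prod_congr rfl fun j _ ↦ add_mul_mul_add_inv_mul_eq hX hY (pow_ne_zero j hζ0),
    prod_mul_distrib, prod_const, Nat.card_Icc, Nat.add_sub_cancel]
  ring

/-- For `r` an odd prime, `ζ` a primitive `r`-th root of unity and
`h_r(x) = ∏_{j=1}^{(r−1)/2} (x − (ζ^j + ζ^{−j}))`, one has, for all nonzero `X, Y`,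
`(−X·Y)^{(r−1)/2}·(X + Y)·h_r(2 − (X+Y)²/(X·Y)) = X^r + Y^r`. -/
theorem stmt5 (r : ℕ) (hr : r.Prime) (hodd : Odd r) (ζ : ℂ) (hζ : IsPrimitiveRoot ζ r)
    (X Y : ℂ) (hX : X ≠ 0) (hY : Y ≠ 0) :
    (-(X * Y)) ^ ((r - 1) / 2) * (X + Y) *
        ∏ j ∈ Finset.Icc 1 ((r - 1) / 2),
          (2 - (X + Y) ^ 2 / (X * Y) - (ζ ^ j + ζ⁻¹ ^ j)) =
      X ^ r + Y ^ r :=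
  stmt5_general r hodd ζ hζ X Y hX hY
end

section
/- Let r be an odd prime, ζ a primitive r-th root of unity, α nonzero with β = 1/α, δ nonzero, γ_j = δ(ζ^j α + ζ^(−j) β). For each fixed k with 0 ≤ k ≤ r−1, one has ∏_{0 ≤ j ≤ r−1, j ≠ k} (γ_k − γ_j) = r·δ^(r−1)·(α^r − β^r) / (ζ^k·(α − ζ^(−2k)·β)). -/
/-!
Writing `a = ζ ^ k` and `b = ζ ^ j`, each factor splits as
`γ_k - γ_j = δ (a - b) (α - b⁻¹ a⁻¹ β)`. The first factors multiply to the derivative of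
`X ^ r - 1` at the node `a`, which is `r a⁻¹`. Since `ζ⁻¹` is again a primitive `r`-th root
of unity, the second factors, together with the missing one at `j = k`, multiply to
`α ^ r - (a⁻¹ β) ^ r = α ^ r - β ^ r`.
-/

open Finset Polynomial

namespace IsPrimitiveRoot

section CommRing

variable {R : Type*} [CommRing R] [IsDomain R] {ζ : R} {n : ℕ}

theorem prod_range_sub_pow_mul (hζ : IsPrimitiveRoot ζ n) (hn : 0 < n) (x c : R) :
    ∏ j ∈ range n, (x - ζ ^ j * c) = x ^ n - c ^ n := by
  simpa [eval_prod] using congrArg (eval x) (X_pow_sub_C_eq_prod hζ hn (α := c) rfl).symm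

theorem pow_mul_prod_erase_pow_sub_pow (hζ : IsPrimitiveRoot ζ n) {k : ℕ} (hk : k < n) :
    ζ ^ k * ∏ j ∈ (range n).erase k, (ζ ^ k - ζ ^ j) = n := by
  have hn : 0 < n := k.zero_le.trans_lt hk
  have hnodal : Lagrange.nodal (range n) (ζ ^ ·) = X ^ n - 1 := by
    simpa [Lagrange.nodal] using (X_pow_sub_C_eq_prod hζ hn (one_pow n)).symm
  have hderiv := Lagrange.eval_nodal_derivative_eval_node_eq (v := (ζ ^ ·)) (mem_range.2 hk)
  rw [hnodal, Lagrange.eval_nodal] at hderiv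
  rw [← hderiv, derivative_sub, derivative_one, sub_zero, derivative_X_pow]
  rw [eval_mul, eval_C, eval_pow, eval_X, mul_left_comm, ← pow_succ', Nat.sub_add_cancel hn,
    pow_right_comm, hζ.pow_eq_one, one_pow, mul_one]

end CommRing

theorem mul_add_inv_mul_sub_mul_add_inv_mul {F : Type*} [Field F] {a b : F} (ha : a ≠ 0)
    (hb : b ≠ 0) (x y : F) :
    (a * x + a⁻¹ * y) - (b * x + b⁻¹ * y) = (a - b) * (x - b⁻¹ * (a⁻¹ * y)) := by
  field_simp
  ring

theorem pow_mul_sub_mul_prod_erase {F : Type*} [Field F] {ζ : F} {n : ℕ}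
    (hζ : IsPrimitiveRoot ζ n) (x y δ : F) {k : ℕ} (hk : k < n) :
    ζ ^ k * (x - ζ⁻¹ ^ k * (ζ⁻¹ ^ k * y)) *
        ∏ j ∈ (range n).erase k,
          (δ * (ζ ^ k * x + ζ⁻¹ ^ k * y) - δ * (ζ ^ j * x + ζ⁻¹ ^ j * y)) =
      n * δ ^ (n - 1) * (x ^ n - y ^ n) := by
  have hn : 0 < n := k.zero_le.trans_lt hk
  have hζ0 : ζ ≠ 0 := hζ.ne_zero hn.ne'
  set c := ζ⁻¹ ^ k * y with hc
  have hfactor : ∀ j, δ * (ζ ^ k * x + ζ⁻¹ ^ k * y) - δ * (ζ ^ j * x + ζ⁻¹ ^ j * y) =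
      δ * (ζ ^ k - ζ ^ j) * (x - ζ⁻¹ ^ j * c) := fun j => by
    rw [← mul_sub, mul_assoc, inv_pow, inv_pow,
      mul_add_inv_mul_sub_mul_add_inv_mul (pow_ne_zero _ hζ0) (pow_ne_zero _ hζ0), hc, inv_pow]
  have hnodes := hζ.pow_mul_prod_erase_pow_sub_pow hk
  have hcn : c ^ n = y ^ n := by
    rw [mul_pow, pow_right_comm, hζ.inv.pow_eq_one, one_pow, one_mul]
  have hpoly :
      (x - ζ⁻¹ ^ k * c) * ∏ j ∈ (range n).erase k, (x - ζ⁻¹ ^ j * c) = x ^ n - y ^ n := by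
    rw [mul_prod_erase _ (fun j => x - ζ⁻¹ ^ j * c) (mem_range.2 hk),
      hζ.inv.prod_range_sub_pow_mul hn, hcn]
  rw [prod_congr rfl fun j _ => hfactor j, prod_mul_distrib, prod_mul_distrib, prod_const,
    card_erase_of_mem (mem_range.2 hk), card_range, ← hnodes, ← hpoly]
  ring

end IsPrimitiveRoot

theorem stmt9_general {F : Type*} [Field F] (r : ℕ) (hr : r.Prime)
    (ζ α δ : F) (hζ : IsPrimitiveRoot ζ r)
    (hdist : ∀ m : ℤ, α ≠ ζ ^ m * α⁻¹) (k : ℕ) (hk : k ≤ r - 1) :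
    ∏ j ∈ (Finset.range r).erase k,
        (δ * (ζ ^ k * α + ζ⁻¹ ^ k * α⁻¹) - δ * (ζ ^ j * α + ζ⁻¹ ^ j * α⁻¹)) =
      (r : F) * δ ^ (r - 1) * (α ^ r - α⁻¹ ^ r) /
        (ζ ^ k * (α - ζ ^ (-2 * (k : ℤ)) * α⁻¹)) := by
  have hkr : k < r := by have := hr.pos; omega
  have hzpow : ζ ^ (-2 * (k : ℤ)) * α⁻¹ = ζ⁻¹ ^ k * (ζ⁻¹ ^ k * α⁻¹) := by
    rw [← mul_assoc, ← pow_add, ← two_mul, inv_pow, ← zpow_natCast, ← zpow_neg]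
    push_cast
    ring_nf
  have hden : ζ ^ k * (α - ζ ^ (-2 * (k : ℤ)) * α⁻¹) ≠ 0 :=
    mul_ne_zero (pow_ne_zero _ (hζ.ne_zero hr.ne_zero)) (sub_ne_zero.2 (hdist _))
  rw [eq_div_iff hden, mul_comm, hzpow]
  exact hζ.pow_mul_sub_mul_prod_erase α α⁻¹ δ hkr

/-- With `γ_j := δ(ζ^j α + ζ^{−j} β)` pairwise distinct, for each `0 ≤ k ≤ r−1`:
`∏_{j ≠ k} (γ_k − γ_j) = r·δ^{r−1}·(α^r − β^r) / (ζ^k·(α − ζ^{−2k}·β))`. -/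
theorem stmt9 {F : Type*} [Field F] [IsAlgClosed F] [CharZero F] (r : ℕ) (hr : r.Prime)
    (hodd : Odd r) (ζ α δ : F) (hζ : IsPrimitiveRoot ζ r) (hα : α ≠ 0) (hδ : δ ≠ 0)
    (hdist : ∀ m : ℤ, α ≠ ζ ^ m * α⁻¹) (k : ℕ) (hk : k ≤ r - 1) :
    ∏ j ∈ (Finset.range r).erase k,
        (δ * (ζ ^ k * α + ζ⁻¹ ^ k * α⁻¹) - δ * (ζ ^ j * α + ζ⁻¹ ^ j * α⁻¹)) =
      (r : F) * δ ^ (r - 1) * (α ^ r - α⁻¹ ^ r) /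
        (ζ ^ k * (α - ζ ^ (-2 * (k : ℤ)) * α⁻¹)) :=
  stmt9_general r hr ζ α δ hζ hdist k hk
end

section
/- Let r be an odd prime and F a finite extension of ℚ_r not containing a primitive r-th root of unity, with normalized valuation v_F. Let u ∈ O_F be not an r-th power in O_F with v_F(u) ≢ 0 (mod r), and M = F(u^(1/r)). Then v_F(disc(M/F)) = r·e(F/ℚ_r) + r − 1. -/
/-!
Since `r ∤ v(u)`, the monomials `a tⁱ` (`a ∈ F`, `i < r`) have pairwise distinct valuations, so
the valuation of `∑ aᵢ tⁱ` is the least of those of its terms. Hence the powers of `t` form a basis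
and `w(Mˣ) = ℤ` forces `w = r·v` on `F`: the extension is totally ramified of degree `r`. A Bézout
combination `π = t^y p^x` with a uniformizer `p` of `F` is a uniformizer of `M` with `π^r = c ∈ F`,
`v(c) = 1`, and the same minimum principle shows that the powers of `π` form an `O_F`-basis of
`O_M`. So `disc(b)` differs from `disc(1, π, …, π^(r-1)) = ± r^r c^(r-1)` by the square of a unit.
-/

/-- A `ℤ`-valued additive valuation on a field; the value `v 0` is unconstrained. -/
structure IsIntValuation {K : Type*} [Field K] (v : K → ℤ) : Prop where
  map_mul : ∀ x y : K, x ≠ 0 → y ≠ 0 → v (x * y) = v x + v y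
  min_le_map_add : ∀ x y : K, x ≠ 0 → y ≠ 0 → x + y ≠ 0 → min (v x) (v y) ≤ v (x + y)

theorem Matrix.det_mem_of_forall_mem {R : Type*} [CommRing R] {S : Subring R} {ι : Type*}
    [Fintype ι] [DecidableEq ι] {A : Matrix ι ι R} (hA : ∀ i j, A i j ∈ S) : A.det ∈ S := by
  rw [Matrix.det_apply']
  exact S.sum_mem fun σ _ => S.mul_mem (intCast_mem S _) (S.prod_mem fun i _ => hA _ _)

namespace IsIntValuation

variable {K : Type*} [Field K] {v : K → ℤ}

theorem map_one (hv : IsIntValuation v) : v 1 = 0 := by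
  have := hv.map_mul 1 1 one_ne_zero one_ne_zero
  rw [one_mul] at this
  omega

theorem map_neg (hv : IsIntValuation v) {x : K} (hx : x ≠ 0) : v (-x) = v x := by
  have h1 := hv.map_mul (-1) (-1) (by norm_num) (by norm_num)
  rw [neg_one_mul, neg_neg, hv.map_one] at h1
  rw [← neg_one_mul, hv.map_mul _ _ (by norm_num) hx]
  omega

theorem map_neg_one_pow_mul (hv : IsIntValuation v) (k : ℕ) {x : K} (hx : x ≠ 0) :
    v ((-1) ^ k * x) = v x := by
  rcases neg_one_pow_eq_or K k with h | h <;> simp [h, hv.map_neg hx]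

theorem map_pow (hv : IsIntValuation v) {x : K} (hx : x ≠ 0) (n : ℕ) : v (x ^ n) = n * v x := by
  induction n with
  | zero => simpa using hv.map_one
  | succ n ih =>
    rw [pow_succ, hv.map_mul _ _ (pow_ne_zero _ hx) hx, ih]
    push_cast
    ring

theorem map_inv (hv : IsIntValuation v) {x : K} (hx : x ≠ 0) : v x⁻¹ = -v x := by
  have := hv.map_mul x x⁻¹ hx (inv_ne_zero hx)
  rw [mul_inv_cancel₀ hx, hv.map_one] at this
  omega

theorem map_zpow (hv : IsIntValuation v) {x : K} (hx : x ≠ 0) (n : ℤ) : v (x ^ n) = n * v x := by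
  obtain ⟨n, rfl | rfl⟩ := n.eq_nat_or_neg
  · rw [zpow_natCast, hv.map_pow hx]
  · rw [zpow_neg, zpow_natCast, hv.map_inv (pow_ne_zero _ hx), hv.map_pow hx]
    ring

theorem map_add_of_lt (hv : IsIntValuation v) {x y : K} (hx : x ≠ 0) (hy : y ≠ 0)
    (hxy : v x < v y) : x + y ≠ 0 ∧ v (x + y) = v x := by
  have hsum : x + y ≠ 0 := by
    intro h
    rw [eq_neg_of_add_eq_zero_left h, hv.map_neg hy] at hxy
    exact hxy.false
  refine ⟨hsum, le_antisymm ?_ (le_trans (le_min le_rfl hxy.le) (hv.min_le_map_add x y hx hy hsum))⟩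
  have := hv.min_le_map_add (x + y) (-y) hsum (neg_ne_zero.2 hy) (by simpa using hx)
  rw [add_neg_cancel_right, hv.map_neg hy] at this
  omega

theorem eq_zero_or_lt_map_add (hv : IsIntValuation v) {g : ℤ} {x y : K}
    (hx : x = 0 ∨ g < v x) (hy : y = 0 ∨ g < v y) : x + y = 0 ∨ g < v (x + y) := by
  rcases eq_or_ne x 0 with rfl | hx0
  · simpa using hy
  rcases eq_or_ne y 0 with rfl | hy0
  · simpa using hx
  rcases eq_or_ne (x + y) 0 with h | h
  · exact .inl h
  · exact .inr (lt_of_lt_of_le (lt_min (hx.resolve_left hx0) (hy.resolve_left hy0))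
      (hv.min_le_map_add x y hx0 hy0 h))

theorem map_sum_eq_of_lt (hv : IsIntValuation v) {ι : Type*} [DecidableEq ι] {s : Finset ι}
    {f : ι → K} {j : ι} (hj : j ∈ s) (hfj : f j ≠ 0)
    (hf : ∀ i ∈ s, i ≠ j → f i = 0 ∨ v (f j) < v (f i)) :
    ∑ i ∈ s, f i ≠ 0 ∧ v (∑ i ∈ s, f i) = v (f j) := by
  have hrest : ∑ i ∈ s.erase j, f i = 0 ∨ v (f j) < v (∑ i ∈ s.erase j, f i) :=
    Finset.sum_induction _ (fun x => x = 0 ∨ v (f j) < v x)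
      (fun _ _ => hv.eq_zero_or_lt_map_add) (.inl rfl)
      (fun i hi => hf i (Finset.mem_of_mem_erase hi) (Finset.ne_of_mem_erase hi))
  rw [← Finset.add_sum_erase s f hj]
  rcases eq_or_ne (∑ i ∈ s.erase j, f i) 0 with h0 | h0
  · simpa [h0] using hfj
  · exact hv.map_add_of_lt hfj h0 (hrest.resolve_left h0)

theorem exists_map_sum_eq_min (hv : IsIntValuation v) {ι : Type*} [Fintype ι] {f : ι → K}
    (hf : ∃ i, f i ≠ 0)
    (hinj : ∀ i j, f i ≠ 0 → f j ≠ 0 → v (f i) = v (f j) → i = j) :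
    ∃ i, f i ≠ 0 ∧ ∑ j, f j ≠ 0 ∧ v (∑ j, f j) = v (f i) ∧
      ∀ j, f j ≠ 0 → v (f i) ≤ v (f j) := by
  classical
  obtain ⟨i, hi, hmin⟩ := Finset.exists_min_image {j | f j ≠ 0} (v ∘ f)
    (by simpa [Finset.Nonempty] using hf)
  simp only [Finset.mem_filter, Finset.mem_univ, true_and, Function.comp] at hi hmin
  have hvi : ∀ j, j ≠ i → f j = 0 ∨ v (f i) < v (f j) := fun j hji =>
    or_iff_not_imp_left.2 fun hj =>
      lt_of_le_of_ne (hmin j hj) fun h => hji (hinj j i hj hi h.symm)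
  obtain ⟨hsum, hval⟩ := hv.map_sum_eq_of_lt (Finset.mem_univ i) hi fun j _ => hvi j
  exact ⟨i, hi, hsum, hval, hmin⟩

def integers (hv : IsIntValuation v) : Subring K where
  carrier := {x | x = 0 ∨ 0 ≤ v x}
  zero_mem' := .inl rfl
  one_mem' := .inr hv.map_one.ge
  add_mem' {x y} hx hy :=
    (hv.eq_zero_or_lt_map_add (g := -1) (hx.imp_right fun h => by omega)
      (hy.imp_right fun h => by omega)).imp_right fun h => by omega
  mul_mem' {x y} hx hy := by
    rcases eq_or_ne x 0 with rfl | hx0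
    · exact .inl (zero_mul y)
    rcases eq_or_ne y 0 with rfl | hy0
    · exact .inl (mul_zero x)
    exact .inr (by rw [hv.map_mul x y hx0 hy0]; linarith [hx.resolve_left hx0, hy.resolve_left hy0])
  neg_mem' {x} hx := by
    rcases eq_or_ne x 0 with rfl | hx0
    · exact .inl neg_zero
    · exact .inr (by rw [hv.map_neg hx0]; exact hx.resolve_left hx0)

theorem mem_integers (hv : IsIntValuation v) {x : K} : x ∈ hv.integers ↔ x = 0 ∨ 0 ≤ v x :=
  Iff.rfl

theorem map_det_eq_zero_of_mul_eq_one (hv : IsIntValuation v) {ι : Type*} [Fintype ι]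
    [DecidableEq ι] {A B : Matrix ι ι K} (hA : ∀ i j, A i j ∈ hv.integers)
    (hB : ∀ i j, B i j ∈ hv.integers) (hAB : A * B = 1) : v A.det = 0 := by
  have hdet : A.det * B.det = 1 := by rw [← Matrix.det_mul, hAB, Matrix.det_one]
  have hA0 : A.det ≠ 0 := left_ne_zero_of_mul_eq_one hdet
  have hB0 : B.det ≠ 0 := right_ne_zero_of_mul_eq_one hdet
  have hsum := hv.map_mul _ _ hA0 hB0
  rw [hdet, hv.map_one] at hsum
  have := ((hv.mem_integers).1 (Matrix.det_mem_of_forall_mem hA)).resolve_left hA0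
  have := ((hv.mem_integers).1 (Matrix.det_mem_of_forall_mem hB)).resolve_left hB0
  omega

theorem map_discr_eq_of_toMatrix_mem_integers (hv : IsIntValuation v) {L ι : Type*} [Field L]
    [Algebra K L] [Fintype ι] [DecidableEq ι] (b b' : Module.Basis ι K L)
    (h : ∀ i j, b.toMatrix b' i j ∈ hv.integers) (h' : ∀ i j, b'.toMatrix b i j ∈ hv.integers) :
    v (Algebra.discr K b') = v (Algebra.discr K b) := by
  have hdiscr : Algebra.discr K b' = (b.toMatrix b').det ^ 2 * Algebra.discr K b := by
    conv_lhs => rw [← b.toMatrix_map_vecMul b']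
    exact Algebra.discr_of_matrix_vecMul _ _
  have hdet := hv.map_det_eq_zero_of_mul_eq_one h h' (b.toMatrix_mul_toMatrix_flip b')
  have hdet0 : (b.toMatrix b').det ≠ 0 := left_ne_zero_of_mul_eq_one <| by
    rw [← Matrix.det_mul, b.toMatrix_mul_toMatrix_flip, Matrix.det_one]
  rcases eq_or_ne (Algebra.discr K b) 0 with h0 | h0
  · rw [hdiscr, h0, mul_zero]
  · rw [hdiscr, hv.map_mul _ _ (pow_ne_zero _ hdet0) h0, hv.map_pow hdet0, hdet, mul_zero, zero_add]

end IsIntValuation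

open Polynomial in
theorem PowerBasis.minpoly_gen_eq_X_pow_sub_C {K L : Type*} [Field K] [Field L] [Algebra K L]
    (pb : PowerBasis K L) {c : K} (hc : pb.gen ^ pb.dim = algebraMap K L c) :
    minpoly K pb.gen = X ^ pb.dim - C c := by
  have hroot : aeval pb.gen (X ^ pb.dim - C c) = 0 := by
    rw [map_sub, map_pow, aeval_X, aeval_C, hc, sub_self]
  refine (eq_of_monic_of_dvd_of_natDegree_le (minpoly.monic pb.isIntegral_gen)
    (monic_X_pow_sub_C c pb.dim_ne_zero) (minpoly.dvd K _ hroot) ?_).symm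
  rw [natDegree_X_pow_sub_C, pb.natDegree_minpoly]

open Polynomial in
theorem PowerBasis.discr_basis_of_gen_pow_eq {K L : Type*} [Field K] [Field L] [Algebra K L]
    [Algebra.IsSeparable K L] (pb : PowerBasis K L) {c : K}
    (hc : pb.gen ^ pb.dim = algebraMap K L c) :
    Algebra.discr K pb.basis = (-1) ^ (pb.dim * (pb.dim - 1) / 2) *
      ((pb.dim : K) ^ pb.dim * ((-1) ^ pb.dim * -c) ^ (pb.dim - 1)) := by
  have := pb.finite
  have hmin := pb.minpoly_gen_eq_X_pow_sub_C hc
  have hnorm : Algebra.norm K pb.gen = (-1) ^ pb.dim * -c := by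
    rw [Algebra.PowerBasis.norm_gen_eq_coeff_zero_minpoly, hmin]
    simp [pb.dim_ne_zero.symm]
  rw [Algebra.discr_powerBasis_eq_norm, hmin, pb.finrank, derivative_sub, derivative_C,
    sub_zero, derivative_X_pow, map_mul, aeval_C, map_pow, aeval_X, map_mul, map_pow,
    Algebra.norm_algebraMap, pb.finrank, hnorm]

theorem IsIntValuation.map_discr_powerBasis_of_gen_pow_eq {K L : Type*} [Field K] [Field L]
    [Algebra K L] [Algebra.IsSeparable K L] {v : K → ℤ} (hv : IsIntValuation v)
    (pb : PowerBasis K L) {c : K} (hc : pb.gen ^ pb.dim = algebraMap K L c)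
    (hdim : (pb.dim : K) ≠ 0) (hc0 : c ≠ 0) :
    v (Algebra.discr K pb.basis) = pb.dim * v (pb.dim : K) + (pb.dim - 1) * v c := by
  have hsign : (-1 : K) ^ pb.dim * -c = (-1) ^ (pb.dim + 1) * c := by ring
  rw [pb.discr_basis_of_gen_pow_eq hc, hsign, hv.map_neg_one_pow_mul _ (by simp [hdim, hc0]),
    hv.map_mul _ _ (pow_ne_zero _ hdim) (by simp [hc0]), hv.map_pow hdim,
    hv.map_pow (by simp [hc0]), hv.map_neg_one_pow_mul _ hc0, Nat.cast_sub pb.dim_pos,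
    Nat.cast_one]

theorem Fin.eq_of_dvd_sub {n : ℕ} {i j : Fin n} (h : (n : ℤ) ∣ (i : ℤ) - j) : i = j := by
  have hlt : |(i : ℤ) - j| < n := abs_sub_lt_iff.2 ⟨by omega, by omega⟩
  exact Fin.ext (by have := Int.eq_zero_of_abs_lt_dvd h hlt; omega)

theorem Fin.eq_of_mul_add_eq {n : ℕ} {i j : Fin n} {x y : ℤ} (h : n * x + i = n * y + j) :
    i = j :=
  Fin.eq_of_dvd_sub ⟨y - x, by linarith⟩

theorem Fin.eq_of_mul_add_mul_eq {r : ℕ} (hr : r.Prime) {m s d x y : ℤ} (hm : m ≠ 0)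
    (hd : ¬ (r : ℤ) ∣ d) (hs : r * s = m * d) {i j : Fin r}
    (h : m * x + i * s = m * y + j * s) : i = j := by
  have hrx : m * (r * x + i * d) = m * (r * y + j * d) := by
    linear_combination (r : ℤ) * h + (j - i : ℤ) * hs
  have hdvd : (r : ℤ) ∣ (i - j : ℤ) * d := ⟨y - x, by linarith [mul_left_cancel₀ hm hrx]⟩
  exact Fin.eq_of_dvd_sub ((Nat.prime_iff_prime_int.1 hr).dvd_or_dvd hdvd |>.resolve_right hd)

open Polynomial in
theorem span_pow_eq_top_of_adjoin_eq_top {F M : Type*} [Field F] [Field M] [Algebra F M] {n : ℕ}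
    (hn : n ≠ 0) {t : M} {a : F} (ht : t ^ n = algebraMap F M a) (hgen : Algebra.adjoin F {t} = ⊤) :
    Submodule.span F (Set.range fun i : Fin n => t ^ (i : ℕ)) = ⊤ := by
  refine eq_top_iff.2 fun x _ => ?_
  have hx : x ∈ Algebra.adjoin F {t} := hgen ▸ Algebra.mem_top
  obtain ⟨p, rfl⟩ := Algebra.adjoin_singleton_eq_range_aeval F t ▸ hx
  have hroot : aeval t (X ^ n - C a) = 0 := by
    rw [map_sub, map_pow, aeval_X, aeval_C, ht, sub_self]
  refine PowerBasis.mem_span_pow'.2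
    ⟨p %ₘ (X ^ n - C a), ?_, (aeval_modByMonic_eq_self_of_root hroot).symm⟩
  simpa [degree_X_pow_sub_C (Nat.pos_of_ne_zero hn)] using
    degree_modByMonic_lt p (monic_X_pow_sub_C a hn)

namespace IsIntValuation

variable {F M : Type*} [Field F] [Field M] [Algebra F M] {v : F → ℤ} {w : M → ℤ} {m : ℤ} {n r : ℕ}
  {π : M}

theorem map_smul (hw : IsIntValuation w) (hm : ∀ y : F, y ≠ 0 → w (algebraMap F M y) = m * v y)
    {c : F} {x : M} (hc : c ≠ 0) (hx : x ≠ 0) : w (c • x) = m * v c + w x := by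
  rw [Algebra.smul_def, hw.map_mul _ _ ((map_ne_zero _).2 hc) hx, hm c hc]

theorem exists_map_sum_smul_pow_eq_min (hw : IsIntValuation w)
    (hm : ∀ y : F, y ≠ 0 → w (algebraMap F M y) = m * v y) {z : M} (hz : z ≠ 0)
    (hsep : ∀ (i j : Fin n) (a b : F), a ≠ 0 → b ≠ 0 →
      m * v a + i * w z = m * v b + j * w z → i = j)
    {c : Fin n → F} (hc : ∃ i, c i ≠ 0) :
    ∃ i, c i ≠ 0 ∧ ∑ j, c j • z ^ (j : ℕ) ≠ 0 ∧
      w (∑ j, c j • z ^ (j : ℕ)) = m * v (c i) + i * w z ∧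
      ∀ j, c j ≠ 0 → m * v (c i) + i * w z ≤ m * v (c j) + j * w z := by
  have hterm : ∀ j, c j ≠ 0 → w (c j • z ^ (j : ℕ)) = m * v (c j) + j * w z := fun j hj => by
    rw [hw.map_smul hm hj (pow_ne_zero _ hz), hw.map_pow hz]
  have hne : ∀ j, c j • z ^ (j : ℕ) ≠ 0 ↔ c j ≠ 0 := fun j => by simp [hz]
  obtain ⟨i, hi, hsum, hval, hmin⟩ := hw.exists_map_sum_eq_min (f := fun j => c j • z ^ (j : ℕ))
    (by simpa only [hne] using hc) fun i j hi hj hij => by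
      rw [hne] at hi hj
      exact hsep i j _ _ hi hj (by rw [← hterm i hi, ← hterm j hj, hij])
  rw [hne] at hi
  refine ⟨i, hi, hsum, hval.trans (hterm i hi), fun j hj => ?_⟩
  rw [← hterm i hi, ← hterm j hj]
  exact hmin j ((hne j).2 hj)

theorem linearIndependent_pow (hw : IsIntValuation w)
    (hm : ∀ y : F, y ≠ 0 → w (algebraMap F M y) = m * v y) {z : M} (hz : z ≠ 0)
    (hsep : ∀ (i j : Fin n) (a b : F), a ≠ 0 → b ≠ 0 →
      m * v a + i * w z = m * v b + j * w z → i = j) :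
    LinearIndependent F (fun i : Fin n => z ^ (i : ℕ)) := by
  rw [Fintype.linearIndependent_iff]
  intro c hc i
  by_contra hci
  exact (hw.exists_map_sum_smul_pow_eq_min hm hz hsep ⟨i, hci⟩).choose_spec.2.1 hc

theorem coeff_mem_integers_of_map_eq_one (hv : IsIntValuation v) (hw : IsIntValuation w)
    (hm : ∀ y : F, y ≠ 0 → w (algebraMap F M y) = n * v y) (hπ0 : π ≠ 0) (hπ : w π = 1)
    {c : Fin n → F} (hsum : ∑ i, c i • π ^ (i : ℕ) ∈ hw.integers) (i : Fin n) :
    c i ∈ hv.integers := by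
  rcases eq_or_ne (c i) 0 with hci | hci
  · exact .inl hci
  obtain ⟨k, -, hne, hval, hmin⟩ := hw.exists_map_sum_smul_pow_eq_min hm hπ0
    (fun i j a b _ _ h => Fin.eq_of_mul_add_eq (by simpa [hπ] using h)) ⟨i, hci⟩
  have hnonneg := (hw.mem_integers.1 hsum).resolve_left hne
  have hle := hmin i hci
  rw [hπ] at hval hle
  have hi : (i : ℤ) < n := by exact_mod_cast i.isLt
  refine .inr (not_lt.1 fun hneg => ?_)
  nlinarith

theorem map_discr_eq_of_uniformizer (hv : IsIntValuation v) (hw : IsIntValuation w) [CharZero F]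
    [FiniteDimensional F M] (hrank : Module.finrank F M = n)
    (hm : ∀ y : F, y ≠ 0 → w (algebraMap F M y) = n * v y) (hπ0 : π ≠ 0) (hπ : w π = 1)
    {c : F} (hπc : π ^ n = algebraMap F M c) (hc : v c = 1)
    {b : Fin n → M} (hb_int : ∀ i, b i ∈ hw.integers) (hb_li : LinearIndependent F b)
    (hb_span : ∀ x ∈ hw.integers, ∃ a : Fin n → F, (∀ i, a i ∈ hv.integers) ∧ x = ∑ i, a i • b i) :
    v (Algebra.discr F b) = n * v (n : F) + n - 1 := by
  have hn : n ≠ 0 := hrank ▸ Module.finrank_pos.ne'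
  have hli := hw.linearIndependent_pow hm hπ0 fun i j a b _ _ h =>
    Fin.eq_of_mul_add_eq (by simpa [hπ] using h)
  let pb : PowerBasis F M :=
    ⟨π, n, basisOfLinearIndependentOfCardEqFinrank' _ hli (by simp [hrank]), fun i => by simp⟩
  let bB := basisOfLinearIndependentOfCardEqFinrank' b hb_li (by simp [hrank])
  have hbB : ⇑bB = b := coe_basisOfLinearIndependentOfCardEqFinrank' ..
  have hπb : ∀ i j, pb.basis.toMatrix bB i j ∈ hv.integers := fun i j => by
    rw [Module.Basis.toMatrix_apply]
    refine coeff_mem_integers_of_map_eq_one hv hw hm hπ0 hπ ?_ i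
    have hsum : ∑ k, pb.basis.repr (bB j) k • π ^ (k : ℕ) = b j := by
      conv_rhs => rw [← hbB, ← pb.basis.sum_repr (bB j)]
      simp only [pb.basis_eq_pow]
      rfl
    exact hsum ▸ hb_int j
  have hbπ : ∀ i j, bB.toMatrix pb.basis i j ∈ hv.integers := fun i j => by
    have hπj : π ^ (j : ℕ) ∈ hw.integers := .inr (by rw [hw.map_pow hπ0, hπ]; positivity)
    obtain ⟨a, ha, hπj⟩ := hb_span _ hπj
    have : bB.repr (pb.basis j) = a := by
      rw [pb.basis_eq_pow, hπj, ← hbB]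
      exact bB.repr_sum_self a
    rw [Module.Basis.toMatrix_apply, this]
    exact ha i
  have hc0 : c ≠ 0 := fun h => hπ0 (pow_eq_zero_iff hn |>.1 (by rw [hπc, h, map_zero]))
  rw [← hbB, hv.map_discr_eq_of_toMatrix_mem_integers pb.basis bB hπb hbπ,
    hv.map_discr_powerBasis_of_gen_pow_eq pb hπc (Nat.cast_ne_zero.2 hn) hc0, hc]
  ring

theorem eq_of_span_pow_eq_top (hw : IsIntValuation w)
    (hm : ∀ y : F, y ≠ 0 → w (algebraMap F M y) = m * v y) (hm0 : 0 < m) (hr : r.Prime)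
    {u : F} {t : M} (ht0 : t ≠ 0) (hwt : r * w t = m * v u) (hur : ¬ (r : ℤ) ∣ v u)
    (hspan : Submodule.span F (Set.range fun i : Fin r => t ^ (i : ℕ)) = ⊤)
    {x : M} (hx0 : x ≠ 0) (hx : w x = 1) : m = r := by
  obtain ⟨c, hc⟩ :=
    (Submodule.mem_span_range_iff_exists_fun F).1 (hspan ▸ Submodule.mem_top (x := x))
  have hc0 : ∃ i, c i ≠ 0 := by
    by_contra! h
    simp [h] at hc
    exact hx0 hc.symm
  obtain ⟨i, -, -, hval, -⟩ := hw.exists_map_sum_smul_pow_eq_min hm ht0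
    (fun i j a b _ _ => Fin.eq_of_mul_add_mul_eq hr hm0.ne' hur hwt) hc0
  rw [hc, hx] at hval
  have hrprime : Prime (r : ℤ) := Nat.prime_iff_prime_int.1 hr
  have hmr : m ∣ r := ⟨r * v (c i) + i * v u, by linear_combination (r : ℤ) * hval + (i : ℤ) * hwt⟩
  have hrm : (r : ℤ) ∣ m := (hrprime.dvd_or_dvd ⟨w t, hwt.symm⟩).resolve_right hur
  exact Int.dvd_antisymm hm0.le (Int.natCast_nonneg r) hmr hrm

theorem exists_uniformizer_pow_eq (hv : IsIntValuation v) (hw : IsIntValuation w)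
    (hm : ∀ y : F, y ≠ 0 → w (algebraMap F M y) = r * v y) (hr : r.Prime) {u : F} {t : M}
    (hu0 : u ≠ 0) (ht : t ^ r = algebraMap F M u) (hur : ¬ (r : ℤ) ∣ v u) {p : F} (hp0 : p ≠ 0)
    (hp : v p = 1) : ∃ (π : M) (c : F), π ≠ 0 ∧ w π = 1 ∧ π ^ r = algebraMap F M c ∧ v c = 1 := by
  have ht0 : t ≠ 0 := fun h => hu0 <| (map_eq_zero _).1 (by rw [← ht, h, zero_pow hr.ne_zero])
  have hwt : w t = v u := by
    have := hw.map_pow ht0 r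
    rw [ht, hm u hu0] at this
    exact mul_left_cancel₀ (Int.natCast_ne_zero.2 hr.ne_zero) this.symm
  obtain ⟨x, y, hxy⟩ := (Prime.coprime_iff_not_dvd (Nat.prime_iff_prime_int.1 hr)).2 hur
  have hpM : algebraMap F M p ≠ 0 := (map_ne_zero _).2 hp0
  refine ⟨t ^ y * algebraMap F M p ^ x, u ^ y * p ^ (x * r),
    mul_ne_zero (zpow_ne_zero _ ht0) (zpow_ne_zero _ hpM), ?_, ?_, ?_⟩
  · rw [hw.map_mul _ _ (zpow_ne_zero _ ht0) (zpow_ne_zero _ hpM), hw.map_zpow ht0,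
      hw.map_zpow hpM, hm p hp0, hwt, hp]
    linarith
  · rw [_root_.map_mul, map_zpow₀, map_zpow₀, mul_pow, ← zpow_natCast, ← zpow_natCast,
      ← zpow_mul, ← zpow_mul, mul_comm y, zpow_mul, zpow_natCast t, ht]
  · rw [hv.map_mul _ _ (zpow_ne_zero _ hu0) (zpow_ne_zero _ hp0), hv.map_zpow hu0,
      hv.map_zpow hp0, hp]
    linarith

end IsIntValuation

theorem stmt13_general (r : ℕ) [Fact (Nat.Prime r)]
    (F : Type*) [Field F] [Algebra ℚ_[r] F]
    -- `v` is a normalized (surjective onto `ℤ`) valuation on `F`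
    (v : F → ℤ)
    (hv_mul : ∀ x y : F, x ≠ 0 → y ≠ 0 → v (x * y) = v x + v y)
    (hv_add : ∀ x y : F, x ≠ 0 → y ≠ 0 → x + y ≠ 0 → min (v x) (v y) ≤ v (x + y))
    (hv_surj : ∀ n : ℤ, ∃ x : F, x ≠ 0 ∧ v x = n)
    -- the ramification index of `F/ℚ_r` is the valuation of `r`
    (e : ℤ) (he : v ((r : ℕ) : F) = e)
    -- `u` is integral, not an `r`-th power in `O_F`, and `v(u) ≢ 0 (mod r)`
    (u : F) (hu0 : u ≠ 0)
    (hur : ¬ (r : ℤ) ∣ v u)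
    -- `M = F(u^{1/r})`
    (M : Type*) [Field M] [Algebra F M]
    (t : M) (ht : t ^ r = algebraMap F M u) (hgen : Algebra.adjoin F {t} = ⊤)
    -- `w` is a normalized valuation on `M` extending `v`
    (w : M → ℤ)
    (hw_mul : ∀ x y : M, x ≠ 0 → y ≠ 0 → w (x * y) = w x + w y)
    (hw_add : ∀ x y : M, x ≠ 0 → y ≠ 0 → x + y ≠ 0 → min (w x) (w y) ≤ w (x + y))
    (hw_surj : ∀ n : ℤ, ∃ x : M, x ≠ 0 ∧ w x = n)
    (hw_ext : ∃ m : ℤ, 0 < m ∧ ∀ y : F, y ≠ 0 → w (algebraMap F M y) = m * v y)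
    -- `b` is an `O_F`-basis of `O_M`
    (b : Fin r → M)
    (hb_int : ∀ i, b i = 0 ∨ 0 ≤ w (b i))
    (hb_li : LinearIndependent F b)
    (hb_span : ∀ x : M, (x = 0 ∨ 0 ≤ w x) ↔
        ∃ c : Fin r → F, (∀ i, c i = 0 ∨ 0 ≤ v (c i)) ∧ x = ∑ i, c i • b i) :
    v (Algebra.discr F b) = r * e + r - 1 := by
  have hr : r.Prime := Fact.out
  have hv : IsIntValuation v := ⟨hv_mul, hv_add⟩
  have hw : IsIntValuation w := ⟨hw_mul, hw_add⟩
  have : CharZero F := charZero_of_injective_algebraMap (algebraMap ℚ_[r] F).injective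
  obtain ⟨m, hm0, hm⟩ := hw_ext
  have ht0 : t ≠ 0 := fun h => hu0 <| (map_eq_zero _).1 (by rw [← ht, h, zero_pow hr.ne_zero])
  have hwt : r * w t = m * v u := by rw [← hm u hu0, ← ht, hw.map_pow ht0]
  have hspan := span_pow_eq_top_of_adjoin_eq_top hr.ne_zero ht hgen
  let tB := Module.Basis.mk (hw.linearIndependent_pow hm ht0
    fun _ _ _ _ _ _ => Fin.eq_of_mul_add_mul_eq hr hm0.ne' hur hwt) hspan.ge
  have : FiniteDimensional F M := .of_basis tB
  have hrank : Module.finrank F M = r := by rw [Module.finrank_eq_card_basis tB, Fintype.card_fin]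
  obtain ⟨x, hx0, hx⟩ := hw_surj 1
  obtain rfl := hw.eq_of_span_pow_eq_top hm hm0 hr ht0 hwt hur hspan hx0 hx
  obtain ⟨p, hp0, hp⟩ := hv_surj 1
  obtain ⟨π, c, hπ0, hπ, hπc, hc⟩ := hv.exists_uniformizer_pow_eq hw hm hr hu0 ht hur hp0 hp
  rw [← he]
  exact hv.map_discr_eq_of_uniformizer hw hrank hm hπ0 hπ hπc hc hb_int hb_li
    fun x hx => (hb_span x).1 hx

/-- Let `F` be a finite extension of `ℚ_r` (with normalized valuation `v`) not containing
a primitive `r`-th root of unity, `u ∈ O_F` not an `r`-th power in `O_F` with `r ∤ v(u)`,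
and `M = F(u^{1/r})`.  If `b` is an `O_F`-basis of `O_M` (the integers for a normalized
valuation `w` of `M` extending `v`), then `v(disc(M/F)) = r·e(F/ℚ_r) + r − 1`, where
`e(F/ℚ_r) = v(r)` is the ramification index. -/
theorem stmt13 (r : ℕ) [Fact (Nat.Prime r)] (hodd : Odd r)
    (F : Type*) [Field F] [Algebra ℚ_[r] F] [FiniteDimensional ℚ_[r] F]
    (hnoroot : ¬ ∃ ζ : F, IsPrimitiveRoot ζ r)
    -- `v` is a normalized (surjective onto `ℤ`) valuation on `F`
    (v : F → ℤ)
    (hv_mul : ∀ x y : F, x ≠ 0 → y ≠ 0 → v (x * y) = v x + v y)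
    (hv_add : ∀ x y : F, x ≠ 0 → y ≠ 0 → x + y ≠ 0 → min (v x) (v y) ≤ v (x + y))
    (hv_surj : ∀ n : ℤ, ∃ x : F, x ≠ 0 ∧ v x = n)
    -- the ramification index of `F/ℚ_r` is the valuation of `r`
    (e : ℤ) (he : v ((r : ℕ) : F) = e)
    -- `u` is integral, not an `r`-th power in `O_F`, and `v(u) ≢ 0 (mod r)`
    (u : F) (hu0 : u ≠ 0) (huint : 0 ≤ v u)
    (hupow : ¬ ∃ z : F, (z = 0 ∨ 0 ≤ v z) ∧ z ^ r = u)
    (hur : ¬ (r : ℤ) ∣ v u)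
    -- `M = F(u^{1/r})`
    (M : Type*) [Field M] [Algebra F M]
    (t : M) (ht : t ^ r = algebraMap F M u) (hgen : Algebra.adjoin F {t} = ⊤)
    -- `w` is a normalized valuation on `M` extending `v`
    (w : M → ℤ)
    (hw_mul : ∀ x y : M, x ≠ 0 → y ≠ 0 → w (x * y) = w x + w y)
    (hw_add : ∀ x y : M, x ≠ 0 → y ≠ 0 → x + y ≠ 0 → min (w x) (w y) ≤ w (x + y))
    (hw_surj : ∀ n : ℤ, ∃ x : M, x ≠ 0 ∧ w x = n)
    (hw_ext : ∃ m : ℤ, 0 < m ∧ ∀ y : F, y ≠ 0 → w (algebraMap F M y) = m * v y)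
    -- `b` is an `O_F`-basis of `O_M`
    (b : Fin r → M)
    (hb_int : ∀ i, b i = 0 ∨ 0 ≤ w (b i))
    (hb_li : LinearIndependent F b)
    (hb_span : ∀ x : M, (x = 0 ∨ 0 ≤ w x) ↔
        ∃ c : Fin r → F, (∀ i, c i = 0 ∨ 0 ≤ v (c i)) ∧ x = ∑ i, c i • b i) :
    v (Algebra.discr F b) = r * e + r - 1 :=
  stmt13_general r F v hv_mul hv_add hv_surj e he u hu0 hur M t ht hgen w hw_mul hw_add hw_surj
    hw_ext b hb_int hb_li hb_span
end
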